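/- arXiv:2010.04749 — 7 statements merged into one kernel-verified Lean document; each statement's English description precedes it below -/
import Mathlib

section
/- If event system (E2, I2) refines event system (E1, I1) modulo a mediator function π (i.e., there is a forward simulation relation R such that every initial state of E2 is related to some initial state of E1, and every transition of E2 from an R-related state can be matched by a π-mapped transition of E1 preserving R), then the element-wise image under π of the set of traces of (E2, I2) is contained in the set of traces of (E1, I1). -/
/-- Event systems: labeled transition systems. -/
structure ES (S E : Type) where
  trans : S → E → S → Prop

namespace ES

/-- Extension of the transition relation to finite sequences of events. -/
inductive mtrans {S E : Type} (M : ES S E) : S → List E → S → Prop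
  | nil (s : S) : mtrans M s [] s
  | snoc {s s' s'' : S} {τ : List E} {e : E} :
      mtrans M s τ s' → M.trans s' e s'' → mtrans M s (τ ++ [e]) s''

/-- The traces of an event system starting from a set of initial states. -/
def traces {S E : Type} (M : ES S E) (I : Set S) : Set (List E) :=
  {τ | ∃ s ∈ I, ∃ s', M.mtrans s τ s'}

/-- Traces starting from a single state. -/
def tracesFrom {S E : Type} (M : ES S E) (s : S) : Set (List E) :=
  M.traces {s}

end ES

/-- Parallel composition of event systems modulo a partial synchronization
function `χ : E1 × E2 ⇀ E`. -/
def ES.par {S1 E1 S2 E2 E : Type} (M1 : ES S1 E1) (M2 : ES S2 E2)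
    (χ : E1 → E2 → Option E) : ES (S1 × S2) E :=
  ⟨fun s e s' => ∃ e1 e2, χ e1 e2 = some e ∧ M1.trans s.1 e1 s'.1 ∧ M2.trans s.2 e2 s'.2⟩

/-- Composition of trace sets modulo `χ`. -/
def tcomp {E1 E2 E : Type} (χ : E1 → E2 → Option E)
    (T1 : Set (List E1)) (T2 : Set (List E2)) : Set (List E) :=
  {τ | ∃ τ1 ∈ T1, ∃ τ2 ∈ T2, ∃ h1 : τ1.length = τ.length, ∃ h2 : τ2.length = τ.length,
      ∀ i : Fin τ.length,
        χ (τ1.get (Fin.cast h1.symm i)) (τ2.get (Fin.cast h2.symm i)) = some (τ.get i)}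

namespace ES

def IsForwardSimulation {S1 E1 S2 E2 : Type} (M1 : ES S1 E1) (M2 : ES S2 E2) (π : E2 → E1)
    (R : S1 → S2 → Prop) : Prop :=
  ∀ s1 s2 e2 s2', R s1 s2 → M2.trans s2 e2 s2' → ∃ s1', M1.trans s1 (π e2) s1' ∧ R s1' s2'

theorem mtrans.snoc_map {S E E' : Type} {M : ES S E'} {f : E → E'} {s s' s'' : S} {τ : List E}
    {e : E} (h : M.mtrans s (τ.map f) s') (ht : M.trans s' (f e) s'') :
    M.mtrans s ((τ ++ [e]).map f) s'' := by
  simpa only [List.map_append, List.map_singleton] using h.snoc ht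

variable {S1 E1 S2 E2 : Type} {M1 : ES S1 E1} {M2 : ES S2 E2}

theorem IsForwardSimulation.mtrans {π : E2 → E1} {R : S1 → S2 → Prop}
    (hR : IsForwardSimulation M1 M2 π R) {s2 s2' : S2} {τ : List E2} (h : M2.mtrans s2 τ s2')
    {s1 : S1} (hs : R s1 s2) : ∃ s1', M1.mtrans s1 (τ.map π) s1' ∧ R s1' s2' := by
  induction h generalizing s1 with
  | nil => exact ⟨s1, .nil s1, hs⟩
  | snoc _ ht ih =>
    obtain ⟨t1, hmt, ht1⟩ := ih hs
    obtain ⟨t1', ht', ht1'⟩ := hR _ _ _ _ ht1 ht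
    exact ⟨t1', hmt.snoc_map ht', ht1'⟩

theorem IsForwardSimulation.map_traces_subset {π : E2 → E1} {R : S1 → S2 → Prop}
    {I1 : Set S1} {I2 : Set S2} (hR : IsForwardSimulation M1 M2 π R)
    (hinit : ∀ s2 ∈ I2, ∃ s1 ∈ I1, R s1 s2) :
    (List.map π) '' M2.traces I2 ⊆ M1.traces I1 := by
  rintro _ ⟨τ, ⟨s2, hs2, s2', hmt⟩, rfl⟩
  obtain ⟨s1, hs1, hs⟩ := hinit s2 hs2
  obtain ⟨s1', hmt1, -⟩ := hR.mtrans hmt hs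
  exact ⟨s1, hs1, s1', hmt1⟩

end ES

/-- Refinement (forward simulation modulo a mediator function) implies
trace inclusion: the element-wise `π`-image of the traces of the concrete
system is contained in the traces of the abstract system. -/
theorem refinement_soundness {S1 E1 S2 E2 : Type}
    (M1 : ES S1 E1) (M2 : ES S2 E2) (I1 : Set S1) (I2 : Set S2)
    (π : E2 → E1) (R : S1 → S2 → Prop)
    (hinit : ∀ s2 ∈ I2, ∃ s1 ∈ I1, R s1 s2)
    (hstep : ∀ s1 s2 e2 s2', R s1 s2 → M2.trans s2 e2 s2' →
      ∃ s1', M1.trans s1 (π e2) s1' ∧ R s1' s2') :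
    (List.map π) '' M2.traces I2 ⊆ M1.traces I1 :=
  ES.IsForwardSimulation.map_traces_subset hstep hinit
end

section
/- For event systems E1 and E2 with initial state sets I1 and I2, and a partial synchronization function χ : E1 × E2 ⇀ E, the traces of the parallel composition E1 ∥χ E2 starting from I1 × I2 equal the χ-composition of the trace sets: traces(E1 ∥χ E2, I1 × I2) = traces(E1, I1) ∥χ traces(E2, I2). -/
/-! A step of `M1.par M2 χ` is exactly a pair of component steps whose events `χ` synchronises.
By induction on the trace from its end, a run of the product therefore splits into runs of `M1`
and `M2` along traces that `χ` maps pointwise onto it, and any two such runs recombine into a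
run of the product. -/

namespace ES

variable {S E : Type} {M : ES S E}

theorem mtrans_nil_iff {s s' : S} : M.mtrans s [] s' ↔ s = s' := by
  refine ⟨fun h => ?_, fun h => h ▸ mtrans.nil s⟩
  generalize hτ : ([] : List E) = τ at h
  cases h with
  | nil => rfl
  | snoc => simp at hτ

theorem mtrans_append_singleton_iff {s s'' : S} {τ : List E} {e : E} :
    M.mtrans s (τ ++ [e]) s'' ↔ ∃ s', M.mtrans s τ s' ∧ M.trans s' e s'' := by
  refine ⟨fun h => ?_, fun ⟨_, hτ, he⟩ => hτ.snoc he⟩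
  generalize hτe : τ ++ [e] = τ' at h
  cases h with
  | nil => simp at hτe
  | snoc hτ he =>
    obtain ⟨rfl, rfl⟩ := List.append_singleton_inj.mp hτe
    exact ⟨_, hτ, he⟩

end ES

section Synchronizes

variable {E1 E2 E : Type} (χ : E1 → E2 → Option E)

def Synchronizes (τ1 : List E1) (τ2 : List E2) (τ : List E) : Prop :=
  ∃ h1 : τ1.length = τ.length, ∃ h2 : τ2.length = τ.length,
    ∀ i : Fin τ.length,
      χ (τ1.get (Fin.cast h1.symm i)) (τ2.get (Fin.cast h2.symm i)) = some (τ.get i)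

variable {χ}

theorem mem_tcomp_iff {T1 : Set (List E1)} {T2 : Set (List E2)} {τ : List E} :
    τ ∈ tcomp χ T1 T2 ↔ ∃ τ1 ∈ T1, ∃ τ2 ∈ T2, Synchronizes χ τ1 τ2 τ :=
  Iff.rfl

theorem synchronizes_iff_getElem {τ1 : List E1} {τ2 : List E2} {τ : List E} :
    Synchronizes χ τ1 τ2 τ ↔ ∃ h1 : τ1.length = τ.length, ∃ h2 : τ2.length = τ.length,
      ∀ (i : ℕ) (hi : i < τ.length), χ τ1[i] τ2[i] = some τ[i] := by
  simp [Synchronizes, Fin.forall_iff]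

theorem synchronizes_nil_iff {τ1 : List E1} {τ2 : List E2} :
    Synchronizes χ τ1 τ2 [] ↔ τ1 = [] ∧ τ2 = [] := by
  simp [synchronizes_iff_getElem]

theorem synchronizes_append_singleton_iff {τ1 : List E1} {τ2 : List E2} {τ : List E} {e : E} :
    Synchronizes χ τ1 τ2 (τ ++ [e]) ↔ ∃ τ1' e1 τ2' e2, τ1 = τ1' ++ [e1] ∧ τ2 = τ2' ++ [e2] ∧
      Synchronizes χ τ1' τ2' τ ∧ χ e1 e2 = some e := by
  simp only [synchronizes_iff_getElem]
  constructor
  · rintro ⟨h1, h2, hχ⟩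
    obtain rfl | ⟨τ1, e1, rfl⟩ := τ1.eq_nil_or_concat'
    · simp at h1
    obtain rfl | ⟨τ2, e2, rfl⟩ := τ2.eq_nil_or_concat'
    · simp at h2
    simp only [List.length_append, List.length_singleton, Nat.add_right_cancel_iff] at h1 h2
    refine ⟨τ1, e1, τ2, e2, rfl, rfl, ⟨h1, h2, fun i hi => ?_⟩, ?_⟩
    · have := hχ i (by simp; omega)
      rwa [List.getElem_append_left (by omega), List.getElem_append_left (by omega),
        List.getElem_append_left hi] at this
    · simpa [h1, h2] using hχ τ.length (by simp)
  · rintro ⟨τ1, e1, τ2, e2, rfl, rfl, ⟨h1, h2, hχ⟩, he⟩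
    refine ⟨by simp [h1], by simp [h2], fun i hi => ?_⟩
    rw [List.length_append, List.length_singleton, Nat.lt_succ_iff_lt_or_eq] at hi
    rcases hi with hi | rfl
    · simpa [List.getElem_append_left, hi, h1, h2] using hχ i hi
    · simpa [h1, h2] using he

end Synchronizes

namespace ES

variable {S1 E1 S2 E2 E : Type} {M1 : ES S1 E1} {M2 : ES S2 E2} {χ : E1 → E2 → Option E}

theorem par_mtrans_iff {s1 s1' : S1} {s2 s2' : S2} {τ : List E} :
    (M1.par M2 χ).mtrans (s1, s2) τ (s1', s2') ↔
      ∃ τ1 τ2, Synchronizes χ τ1 τ2 τ ∧ M1.mtrans s1 τ1 s1' ∧ M2.mtrans s2 τ2 s2' := by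
  induction τ using List.reverseRecOn generalizing s1' s2' with
  | nil => simp [mtrans_nil_iff, synchronizes_nil_iff]
  | append_singleton τ e ih =>
    simp only [mtrans_append_singleton_iff, synchronizes_append_singleton_iff, Prod.exists, ih]
    constructor
    · rintro ⟨t1, t2, ⟨τ1, τ2, hsync, hτ1, hτ2⟩, e1, e2, he, he1, he2⟩
      exact ⟨_, _, ⟨τ1, e1, τ2, e2, rfl, rfl, hsync, he⟩, hτ1.snoc he1, hτ2.snoc he2⟩
    · rintro ⟨_, _, ⟨τ1, e1, τ2, e2, rfl, rfl, hsync, he⟩, hτe1, hτe2⟩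
      obtain ⟨t1, hτ1, he1⟩ := mtrans_append_singleton_iff.mp hτe1
      obtain ⟨t2, hτ2, he2⟩ := mtrans_append_singleton_iff.mp hτe2
      exact ⟨t1, t2, ⟨τ1, τ2, hsync, hτ1, hτ2⟩, e1, e2, he, he1, he2⟩

end ES

/-- Composition theorem: the traces of the parallel composition from the
product of the initial state sets equal the `χ`-composition of the trace sets. -/
theorem trace_composition {S1 E1 S2 E2 E : Type}
    (M1 : ES S1 E1) (M2 : ES S2 E2) (I1 : Set S1) (I2 : Set S2)
    (χ : E1 → E2 → Option E) :
    (M1.par M2 χ).traces (I1 ×ˢ I2) = tcomp χ (M1.traces I1) (M2.traces I2) := by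
  ext τ
  simp only [ES.traces, mem_tcomp_iff, Set.mem_ofPred_eq, Prod.exists, ES.par_mtrans_iff]
  constructor
  · rintro ⟨s1, s2, ⟨hs1, hs2⟩, s1', s2', τ1, τ2, hsync, hτ1, hτ2⟩
    exact ⟨τ1, ⟨s1, hs1, s1', hτ1⟩, τ2, ⟨s2, hs2, s2', hτ2⟩, hsync⟩
  · rintro ⟨τ1, ⟨s1, hs1, s1', hτ1⟩, τ2, ⟨s2, hs2, s2', hτ2⟩, hsync⟩
    exact ⟨s1, s2, ⟨hs1, hs2⟩, s1', s2', τ1, τ2, hsync, hτ1, hτ2⟩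
end

section
/- For an I/O-guarded event system G = (S, Act, guards G, updates U) and any state s, the set of traces of G from s equals the set of traces of the process proc(G, s), where proc(G, s) is defined corecursively as the countable choice, over all bio ∈ Bios and outputs v ∈ Values with G_{(bio,v)}(s) true, of the prefixed process bio(v, z). proc(G, U_{bio(v,z)}(s)). -/
/-! ## Chunks and heaps -/

/-- Chunks: I/O permissions `bio(t, v, w, t')` and tokens `token(t)`. -/
inductive Chunk (B V Pl : Type) : Type
  | bio (b : B) (t : Pl) (v w : V) (t' : Pl)
  | token (t : Pl)

/-- Heaps are (possibly infinite) multisets of chunks, i.e. functions to `ℕ∞`. -/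
abbrev Heap (B V Pl : Type) := Chunk B V Pl → ℕ∞

open Classical in
/-- The singleton heap containing one chunk. -/
noncomputable def Heap.single {B V Pl : Type} (c : Chunk B V Pl) : Heap B V Pl :=
  fun c' => if c' = c then 1 else 0

/-- Well-typedness of a chunk w.r.t. a typing function `Ty`. -/
def Chunk.wellTyped {B V Pl : Type} (Ty : B → V → Set V) : Chunk B V Pl → Prop
  | .bio b _ v w _ => w ∈ Ty b v
  | .token _ => True

/-! ## Assertions (coinductive, as an M-type) -/

/-- Heads of the assertion functor. -/
inductive AssnHead (B V Pl : Type) : Type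
  | bool (b : Bool)
  | chunk (c : Chunk B V Pl)
  | star
  | exv
  | expl

/-- Arities (branching types) of the assertion functor. -/
def AssnAr (B V Pl : Type) : AssnHead B V Pl → Type
  | .bool _ => Empty
  | .chunk _ => Empty
  | .star => Bool
  | .exv => V
  | .expl => Pl

/-- The assertion polynomial functor. -/
def AssnF (B V Pl : Type) : PFunctor := ⟨AssnHead B V Pl, AssnAr B V Pl⟩

/-- Coinductive separation logic assertions:
`φ ::=ν b | c | φ₁ ⋆ φ₂ | ∃v. φ | ∃t. φ`. -/
def Assn (B V Pl : Type) : Type := (AssnF B V Pl).M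

namespace Assn

variable {B V Pl : Type}

/-- Boolean assertion. -/
def mkBool (b : Bool) : Assn B V Pl := PFunctor.M.mk ⟨.bool b, fun e => e.elim⟩

/-- Chunk assertion. -/
def mkChunk (c : Chunk B V Pl) : Assn B V Pl := PFunctor.M.mk ⟨.chunk c, fun e => e.elim⟩

/-- Separating conjunction. -/
def star (φ ψ : Assn B V Pl) : Assn B V Pl :=
  PFunctor.M.mk ⟨.star, fun x : Bool => if x then φ else ψ⟩

/-- Existential quantification over values. -/
def exv (f : V → Assn B V Pl) : Assn B V Pl := PFunctor.M.mk ⟨.exv, f⟩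

/-- Existential quantification over places. -/
def expl (f : Pl → Assn B V Pl) : Assn B V Pl := PFunctor.M.mk ⟨.expl, f⟩

end Assn

/-- One step of the satisfaction relation. -/
def SatF {B V Pl : Type} (Ty : B → V → Set V)
    (R : Heap B V Pl → Assn B V Pl → Prop) (h : Heap B V Pl) (φ : Assn B V Pl) : Prop :=
  match PFunctor.M.dest φ with
  | ⟨.bool b, _⟩ => b = true
  | ⟨.chunk c, _⟩ => 0 < h c ∧ c.wellTyped Ty
  | ⟨.star, f⟩ => ∃ h1 h2, h = h1 + h2 ∧ R h1 (f true) ∧ R h2 (f false)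
  | ⟨.exv, f⟩ => ∃ v, R h (f v)
  | ⟨.expl, f⟩ => ∃ t, R h (f t)

/-- Coinductive satisfaction relation `h ⊨ φ`, as the greatest fixed point
of `SatF` (defined as the union of all post-fixed points). -/
def sat {B V Pl : Type} (Ty : B → V → Set V) (h : Heap B V Pl) (φ : Assn B V Pl) : Prop :=
  ∃ R, (∀ h' φ', R h' φ' → SatF Ty R h' φ') ∧ R h φ

/-! ## Heap transition system -/

/-- The heap transition system over `Option Heap` (`none` is the chaotic state ⊥),
with rules Bio, Contradict, and Chaos. -/
inductive HTrans {B V Pl : Type} (Ty : B → V → Set V) :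
    Option (Heap B V Pl) → B × V × V → Option (Heap B V Pl) → Prop
  | bio {b : B} {v w : V} {t t' : Pl} {h : Heap B V Pl} :
      w ∈ Ty b v →
      HTrans Ty (some (Heap.single (.token t) + Heap.single (.bio b t v w t') + h)) (b, v, w)
        (some (Heap.single (.token t') + h))
  | contradict {b : B} {v w w' : V} {t t' : Pl} {h : Heap B V Pl} :
      w ≠ w' → w ∈ Ty b v → w' ∈ Ty b v →
      HTrans Ty (some (Heap.single (.token t) + Heap.single (.bio b t v w t') + h)) (b, v, w')
        none
  | chaos {b : B} {v w : V} : w ∈ Ty b v → HTrans Ty none (b, v, w) none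

/-- The heap transition system as an event system. -/
def hES {B V Pl : Type} (Ty : B → V → Set V) : ES (Option (Heap B V Pl)) (B × V × V) :=
  ⟨HTrans Ty⟩

/-- Traces executable in all heaps of a set of heaps. -/
def tracesH {B V Pl : Type} (Ty : B → V → Set V) (H : Set (Heap B V Pl)) :
    Set (List (B × V × V)) :=
  {τ | ∀ h ∈ H, τ ∈ (hES Ty).tracesFrom (some h)}

/-- Traces of an assertion: traces executable in all its heap models. -/
def tracesHA {B V Pl : Type} (Ty : B → V → Set V) (φ : Assn B V Pl) :
    Set (List (B × V × V)) :=
  tracesH Ty {h | sat Ty h φ}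

/-! ## Processes (coinductive, as an M-type) -/

/-- Heads of the process functor. -/
inductive ProcHead (B V : Type) : Type
  | null
  | pre (b : B) (v : V)
  | choice

/-- Arities of the process functor. -/
def ProcAr (B V : Type) : ProcHead B V → Type
  | .null => Empty
  | .pre _ _ => V
  | .choice => Bool

/-- The process polynomial functor. -/
def ProcF (B V : Type) : PFunctor := ⟨ProcHead B V, ProcAr B V⟩

/-- Coinductive processes: `P ::=ν Null | bio(v, z).P | P₁ ⊕ P₂`. -/
def Proc (B V : Type) : Type := (ProcF B V).M

namespace Proc

variable {B V : Type}

/-- The inactive process. -/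
def null : Proc B V := PFunctor.M.mk ⟨.null, fun e => e.elim⟩

/-- Prefixing with an I/O operation, binding the input in the continuation. -/
def pre (b : B) (v : V) (k : V → Proc B V) : Proc B V := PFunctor.M.mk ⟨.pre b v, k⟩

/-- Binary choice. -/
def choice (P Q : Proc B V) : Proc B V :=
  PFunctor.M.mk ⟨.choice, fun x : Bool => if x then P else Q⟩

end Proc

/-- Operational semantics of processes (rules Pref and Choice). -/
inductive PTrans {B V : Type} (Ty : B → V → Set V) : Proc B V → B × V × V → Proc B V → Prop
  | pref {P : Proc B V} {b : B} {v w : V} {k : V → Proc B V} :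
      w ∈ Ty b v → PFunctor.M.dest P = ⟨.pre b v, k⟩ → PTrans Ty P (b, v, w) (k w)
  | chl {P P' : Proc B V} {a : B × V × V} {f : Bool → Proc B V} :
      PFunctor.M.dest P = ⟨.choice, f⟩ → PTrans Ty (f true) a P' → PTrans Ty P a P'
  | chr {P P' : Proc B V} {a : B × V × V} {f : Bool → Proc B V} :
      PFunctor.M.dest P = ⟨.choice, f⟩ → PTrans Ty (f false) a P' → PTrans Ty P a P'

/-- The process operational semantics as an event system. -/
def pES {B V : Type} (Ty : B → V → Set V) : ES (Proc B V) (B × V × V) := ⟨PTrans Ty⟩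

/-- Countable (ℕ-indexed) choice, defined corecursively from binary choice. -/
def vchoice {B V : Type} (f : ℕ → Proc B V) : Proc B V :=
  PFunctor.M.corec
    (fun s : Proc B V ⊕ ℕ =>
      match s with
      | .inl p => ⟨(PFunctor.M.dest p).1, fun x => Sum.inl ((PFunctor.M.dest p).2 x)⟩
      | .inr n => ⟨.choice, fun x : Bool => if x then Sum.inl (f n) else Sum.inr (n + 1)⟩)
    (Sum.inr 0)

/-! ## Embedding of processes into assertions -/

/-- States of the corecursion defining the embedding `emb`. -/
inductive EmbSt (B V Pl : Type) : Type
  | proc (P : Proc B V) (t : Pl)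
  | ex1 (b : B) (v : V) (k : V → Proc B V) (t t' : Pl)
  | star1 (b : B) (v : V) (k : V → Proc B V) (t t' : Pl) (z : V)
  | leafChunk (c : Chunk B V Pl)

/-- One step of the corecursion defining the embedding `emb`. -/
def embStep {B V Pl : Type} : EmbSt B V Pl → (AssnF B V Pl).Obj (EmbSt B V Pl)
  | .proc P t =>
    match PFunctor.M.dest P with
    | ⟨.null, _⟩ => ⟨.bool true, fun e => e.elim⟩
    | ⟨.pre b v, k⟩ => ⟨.expl, fun t' => .ex1 b v k t t'⟩
    | ⟨.choice, f⟩ => ⟨.star, fun x : Bool => .proc (f x) t⟩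
  | .ex1 b v k t t' => ⟨.exv, fun z => .star1 b v k t t' z⟩
  | .star1 b v k t t' z =>
      ⟨.star, fun x : Bool => if x then .leafChunk (.bio b t v z t') else .proc (k z) t'⟩
  | .leafChunk c => ⟨.chunk c, fun e => e.elim⟩

/-- The embedding `emb(P, t)` of a process and a place into an assertion:
`emb(Null, t) = true`, `emb(bio(v,z).P, t) = ∃t',z'. bio(t,v,z',t') ⋆ emb(P[z'/z], t')`,
`emb(P₁ ⊕ P₂, t) = emb(P₁, t) ⋆ emb(P₂, t)`. -/
def embA {B V Pl : Type} (P : Proc B V) (t : Pl) : Assn B V Pl :=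
  PFunctor.M.corec embStep (.proc P t)

/-- The process assertion `emb(P) = ∃t. token(t) ⋆ emb(P, t)`. -/
def procAssn {B V : Type} (Pl : Type) (P : Proc B V) : Assn B V Pl :=
  Assn.expl (fun t => Assn.star (Assn.mkChunk (.token t)) (embA P t))

/-- ℕ-indexed iterated separating conjunction, defined corecursively. -/
def AllStar {B V Pl : Type} (f : ℕ → Assn B V Pl) : Assn B V Pl :=
  PFunctor.M.corec
    (fun s : Assn B V Pl ⊕ ℕ =>
      match s with
      | .inl a => ⟨(PFunctor.M.dest a).1, fun x => Sum.inl ((PFunctor.M.dest a).2 x)⟩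
      | .inr n => ⟨.star, fun x : Bool => if x then Sum.inl (f n) else Sum.inr (n + 1)⟩)
    (Sum.inr 0)

/-! ## I/O-guarded event systems and their translation to processes -/

/-- An I/O-guarded event system: guards depend only on the state and the output,
updates compute the next state from output and input. -/
structure IOGES (B V S : Type) where
  guard : B → V → S → Prop
  update : B → V → V → S → S

/-- The event system associated with an I/O-guarded event system:
`s →bio(v,w) s'` iff the guard holds, `w ∈ Ty(bio, v)`, and `s' = U(s)`. -/
def IOGES.es {B V S : Type} (G : IOGES B V S) (Ty : B → V → Set V) : ES S (B × V × V) :=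
  ⟨fun s a s' => G.guard a.1 a.2.1 s ∧ a.2.2 ∈ Ty a.1 a.2.1 ∧
      s' = G.update a.1 a.2.1 a.2.2 s⟩

/-- States of the corecursion defining `proc(G, s)`. -/
inductive PrSt (S : Type) : Type
  | spine (n : ℕ) (s : S)
  | item (n : ℕ) (s : S)

open Classical in
/-- The corecursive translation `proc(G, s)` of an I/O-guarded event system into
a process: the countable choice over all `bio ∈ Bios` and outputs `v` whose guard
holds in `s` of the prefixed processes `bio(v, z). proc(G, U_{bio(v,z)}(s))`,
via an enumeration `e` of the pairs `(bio, v)`. -/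
noncomputable def procOf {B V S : Type} (e : ℕ → B × V) (G : IOGES B V S) (s : S) :
    Proc B V :=
  PFunctor.M.corec
    (fun st : PrSt S =>
      match st with
      | .spine n s => ⟨.choice, fun x : Bool => if x then .item n s else .spine (n + 1) s⟩
      | .item n s =>
          if G.guard (e n).1 (e n).2 s then
            ⟨.pre (e n).1 (e n).2, fun w => .spine 0 (G.update (e n).1 (e n).2 w s)⟩
          else ⟨.null, fun x => x.elim⟩)
    (.spine 0 s)

/-! ## Canonical heap models -/

open Classical in
/-- The I/O permission (as a singleton heap, or the empty heap) found at position
`pos` of process `P` under input schedule `ρ`, with previous place `pp`,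
current position `cp`, and traversed trace `τ`. -/
noncomputable def pm {B V : Type} (ρ : List (B × V × V) → B → V → V) :
    Proc B V → List (B × V × V) → List Bool → List Bool → List Bool →
      Heap B V (List Bool)
  | P, τ, pp, cp, [] =>
    (match PFunctor.M.dest P with
     | ⟨.pre b v, _⟩ => Heap.single (Chunk.bio b pp v (ρ τ b v) (cp ++ [true]))
     | _ => 0)
  | P, τ, pp, cp, d :: pos =>
    (match PFunctor.M.dest P, d with
     | ⟨.pre b v, k⟩, true =>
         pm ρ (k (ρ τ b v)) (τ ++ [(b, v, ρ τ b v)]) (cp ++ [true]) (cp ++ [true]) pos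
     | ⟨.choice, f⟩, d' => pm ρ (f d') τ pp (cp ++ [d']) pos
     | _, _ => 0)

/-- Pointwise (possibly infinite) sum of a family of heaps. -/
noncomputable def hSum {B V Pl ι : Type} (f : ι → Heap B V Pl) : Heap B V Pl :=
  fun c => ⨆ F : Finset ι, ∑ i ∈ F, f i c

/-- The canonical model construction `gmod(P, ρ, τ, ppos, cpos)`: the multiset
sum of `pm(P, ρ, τ, ppos, cpos, pos)` over all positions `pos`. -/
noncomputable def gmod {B V : Type} (ρ : List (B × V × V) → B → V → V)
    (P : Proc B V) (τ : List (B × V × V)) (pp cp : List Bool) :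
    Heap B V (List Bool) :=
  hSum (fun pos : List Bool => pm ρ P τ pp cp pos)

/-- Well-typedness of an input schedule. -/
def schedWT {B V : Type} (Ty : B → V → Set V) (ρ : List (B × V × V) → B → V → V) : Prop :=
  ∀ τ b v, ρ τ b v ∈ Ty b v

/-- The canonical model `cmod(P, ρ) = gmod(P, ρ, [], [], [])`. -/
noncomputable def cmod {B V : Type} (ρ : List (B × V × V) → B → V → V) (P : Proc B V) :
    Heap B V (List Bool) :=
  gmod ρ P [] [] []

/-- The canonical model with a token added at the previous place. -/
noncomputable def gmodTok {B V : Type} (ρ : List (B × V × V) → B → V → V)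
    (P : Proc B V) (τ : List (B × V × V)) (pp cp : List Bool) :
    Heap B V (List Bool) :=
  Heap.single (Chunk.token pp) + gmod ρ P τ pp cp

/-- The set `can(P)` of token-added canonical models over all well-typed schedules. -/
def canSet {B V : Type} (Ty : B → V → Set V) (P : Proc B V) :
    Set (Heap B V (List Bool)) :=
  {h | ∃ ρ, schedWT Ty ρ ∧ h = Heap.single (Chunk.token []) + cmod ρ P}

/-- The set of source places of I/O permissions in a heap. -/
def srcplaces {B V Pl : Type} (h : Heap B V Pl) : Set Pl :=
  {t | ∃ b v w t', 0 < h (Chunk.bio b t v w t')}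

/-- A heap is dead for a position if it has no tokens and no source place
extending the position. -/
def deadFor {B V : Type} (pos : List Bool) (h : Heap B V (List Bool)) : Prop :=
  (∀ t, h (Chunk.token t) = 0) ∧ ∀ p' ∈ srcplaces h, ¬ pos <+: p'

open Classical in
/-- The witness schedule `ρwit(σ)`: for proper prefixes `τ` of `σ`, return the
input of the next matching action of `σ`; otherwise an arbitrary well-typed value
(given by `pick`). -/
noncomputable def rhoWit {B V : Type} (pick : B → V → V) (σ : List (B × V × V)) :
    List (B × V × V) → B → V → V :=
  fun τ b v =>
    if h : ∃ w, ∃ rest, τ <+: σ ∧ σ.drop τ.length = (b, v, w) :: rest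
    then h.choose
    else pick b v


/-!
The map `s ↦ proc(G, s)` is a functional bisimulation between `G` and the process semantics:
every transition of `proc(G, s)` is the image of a transition `s → s'` of `G`, landing in
`proc(G, s')`, and conversely. The spine of the countable choice is infinite, but each
derivation of a process transition is finite, so it selects one summand
`bio(v, z). proc(G, U_{bio(v,z)}(s))` with `(bio, v)` enumerated and its guard true; surjectivity
of the enumeration makes every enabled `(bio, v)` such a summand. Traces are preserved by
functional bisimulations.
-/

namespace ES

variable {S T E : Type} {M : ES S E} {N : ES T E}

theorem mtrans_map_iff (f : S → T)
    (hf : ∀ s a t, N.trans (f s) a t ↔ ∃ s', M.trans s a s' ∧ t = f s')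
    {s : S} {τ : List E} {t : T} :
    N.mtrans (f s) τ t ↔ ∃ s', M.mtrans s τ s' ∧ t = f s' := by
  constructor
  · intro h
    induction h with
    | nil => exact ⟨s, mtrans.nil s, rfl⟩
    | snoc _ hlast ih =>
      obtain ⟨s₁, hs₁, rfl⟩ := ih
      obtain ⟨s₂, hs₂, rfl⟩ := (hf _ _ _).1 hlast
      exact ⟨s₂, hs₁.snoc hs₂, rfl⟩
  · rintro ⟨s', h, rfl⟩
    induction h with
    | nil => exact mtrans.nil _
    | snoc _ hlast ih => exact ih.snoc ((hf _ _ _).2 ⟨_, hlast, rfl⟩)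

theorem tracesFrom_eq_of_trans_iff (f : S → T)
    (hf : ∀ s a t, N.trans (f s) a t ↔ ∃ s', M.trans s a s' ∧ t = f s') (s : S) :
    M.tracesFrom s = N.tracesFrom (f s) := by
  ext τ
  simp only [tracesFrom, traces, Set.mem_ofPred_eq, Set.mem_singleton_iff, exists_eq_left,
    mtrans_map_iff f hf]
  exact ⟨fun ⟨s', h⟩ => ⟨_, s', h, rfl⟩, fun ⟨_, s', h, _⟩ => ⟨s', h⟩⟩

end ES

namespace PTrans

variable {B V : Type} {Ty : B → V → Set V} {P P' : Proc B V} {a : B × V × V}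

theorem iff_of_dest_choice {f : Bool → Proc B V} (hP : PFunctor.M.dest P = ⟨.choice, f⟩) :
    PTrans Ty P a P' ↔ PTrans Ty (f true) a P' ∨ PTrans Ty (f false) a P' := by
  constructor
  · rintro (⟨_, hd⟩ | ⟨hd, h⟩ | ⟨hd, h⟩) <;> rw [hP] at hd <;> cases hd
    · exact .inl h
    · exact .inr h
  · rintro (h | h)
    · exact chl hP h
    · exact chr hP h

theorem iff_of_dest_pre {b : B} {v : V} {k : V → Proc B V}
    (hP : PFunctor.M.dest P = ⟨.pre b v, k⟩) :
    PTrans Ty P a P' ↔ ∃ w ∈ Ty b v, a = (b, v, w) ∧ P' = k w := by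
  constructor
  · rintro (⟨hw, hd⟩ | ⟨hd, _⟩ | ⟨hd, _⟩) <;> rw [hP] at hd <;> cases hd
    exact ⟨_, hw, rfl, rfl⟩
  · rintro ⟨w, hw, rfl, rfl⟩
    exact pref hw hP

theorem not_of_dest_null {k : ProcAr B V .null → Proc B V}
    (hP : PFunctor.M.dest P = ⟨.null, k⟩) : ¬ PTrans Ty P a P' := by
  rintro (⟨_, hd⟩ | ⟨hd, _⟩ | ⟨hd, _⟩) <;> rw [hP] at hd <;> cases hd

end PTrans

namespace PrSt

variable {B V S : Type} {Ty : B → V → Set V} (e : ℕ → B × V) (G : IOGES B V S)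

-- The step function of `procOf`, verbatim, so that `toProc_spine_zero` holds by `rfl`.
open Classical in
noncomputable def toProcStep : PrSt S → (ProcF B V).Obj (PrSt S)
  | .spine n s => ⟨.choice, fun x : Bool => if x then .item n s else .spine (n + 1) s⟩
  | .item n s =>
      if G.guard (e n).1 (e n).2 s then
        ⟨.pre (e n).1 (e n).2, fun w => .spine 0 (G.update (e n).1 (e n).2 w s)⟩
      else ⟨.null, fun x => x.elim⟩

noncomputable def toProc (st : PrSt S) : Proc B V :=
  PFunctor.M.corec (toProcStep e G) st

theorem toProc_spine_zero (s : S) : (spine 0 s).toProc e G = procOf e G s := rfl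

theorem dest_toProc_spine (n : ℕ) (s : S) :
    PFunctor.M.dest ((spine n s).toProc e G) =
      ⟨.choice, fun x : Bool =>
        if x then (item n s).toProc e G else (spine (n + 1) s).toProc e G⟩ := by
  rw [toProc, PFunctor.M.dest_corec]
  exact congrArg (Sigma.mk ProcHead.choice) (funext fun x => by cases x <;> rfl)

theorem dest_toProc_item_of_guard {n : ℕ} {s : S} (hg : G.guard (e n).1 (e n).2 s) :
    PFunctor.M.dest ((item n s).toProc e G) =
      ⟨.pre (e n).1 (e n).2, fun w => procOf e G (G.update (e n).1 (e n).2 w s)⟩ := by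
  rw [toProc, PFunctor.M.dest_corec]
  simp only [toProcStep, hg]
  rfl

theorem dest_toProc_item_of_not_guard {n : ℕ} {s : S} (hg : ¬ G.guard (e n).1 (e n).2 s) :
    PFunctor.M.dest ((item n s).toProc e G) = ⟨.null, fun x => Empty.elim x⟩ := by
  rw [toProc, PFunctor.M.dest_corec]
  simp only [toProcStep, hg]
  exact congrArg (Sigma.mk ProcHead.null) (funext fun x => Empty.elim x)

theorem ptrans_toProc_item_iff {n : ℕ} {s : S} {a : B × V × V} {P' : Proc B V} :
    PTrans Ty ((item n s).toProc e G) a P' ↔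
      (a.1, a.2.1) = e n ∧ ∃ s', (G.es Ty).trans s a s' ∧ P' = procOf e G s' := by
  obtain ⟨b, v, w⟩ := a
  by_cases hg : G.guard (e n).1 (e n).2 s
  · rw [PTrans.iff_of_dest_pre (dest_toProc_item_of_guard e G hg)]
    constructor
    · rintro ⟨w', hw', ha, rfl⟩
      simp only [Prod.mk.injEq] at ha
      obtain ⟨rfl, rfl, rfl⟩ := ha
      exact ⟨rfl, _, ⟨hg, hw', rfl⟩, rfl⟩
    · rintro ⟨hn, s', ⟨-, hw, rfl⟩, rfl⟩
      rw [← hn]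
      exact ⟨w, hw, rfl, rfl⟩
  · refine iff_of_false (PTrans.not_of_dest_null (dest_toProc_item_of_not_guard e G hg)) ?_
    rintro ⟨hn, _, ⟨hg', -⟩, -⟩
    exact hg (hn ▸ hg')

theorem ptrans_toProc_spine_iff {n : ℕ} {s : S} {a : B × V × V} {P' : Proc B V} :
    PTrans Ty ((spine n s).toProc e G) a P' ↔
      ∃ m, n ≤ m ∧ PTrans Ty ((item m s).toProc e G) a P' := by
  constructor
  · generalize hP : (spine n s).toProc e G = P
    intro h
    induction h generalizing n with
    | pref _ hd => rw [← hP, dest_toProc_spine] at hd; cases hd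
    | chl hd h _ =>
      rw [← hP, dest_toProc_spine] at hd
      cases hd
      exact ⟨n, le_rfl, h⟩
    | chr hd _ ih =>
      rw [← hP, dest_toProc_spine] at hd
      cases hd
      obtain ⟨m, hm, h⟩ := ih rfl
      exact ⟨m, by omega, h⟩
  · rintro ⟨m, hnm, h⟩
    obtain ⟨k, rfl⟩ := Nat.exists_eq_add_of_le hnm
    induction k generalizing n with
    | zero => exact (PTrans.iff_of_dest_choice (dest_toProc_spine e G n s)).2 (.inl h)
    | succ k ih =>
      refine (PTrans.iff_of_dest_choice (dest_toProc_spine e G n s)).2 (.inr ?_)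
      exact ih (by omega) (by rwa [show n + (k + 1) = n + 1 + k by omega] at h)

end PrSt

theorem ptrans_procOf_iff {B V S : Type} {Ty : B → V → Set V} {e : ℕ → B × V}
    (he : Function.Surjective e) (G : IOGES B V S) (s : S) (a : B × V × V) (P' : Proc B V) :
    PTrans Ty (procOf e G s) a P' ↔ ∃ s', (G.es Ty).trans s a s' ∧ P' = procOf e G s' := by
  rw [← PrSt.toProc_spine_zero, PrSt.ptrans_toProc_spine_iff]
  simp only [Nat.zero_le, true_and, PrSt.ptrans_toProc_item_iff]
  obtain ⟨m, hm⟩ := he (a.1, a.2.1)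
  exact ⟨fun ⟨_, _, h⟩ => h, fun h => ⟨m, hm.symm, h⟩⟩

/-- Correctness of the translation of I/O-guarded event systems into processes:
for any I/O-guarded event system `G` and state `s`, the traces of `G` from `s`
equal the traces of the process `proc(G, s)`, given an enumeration `e` of all
pairs of I/O operations and outputs. -/
theorem ioges_proc_trace_equiv {B V S : Type} (Ty : B → V → Set V)
    (e : ℕ → B × V) (he : Function.Surjective e) (G : IOGES B V S) (s : S) :
    (G.es Ty).tracesFrom s = (pES Ty).tracesFrom (procOf e G s) :=
  ES.tracesFrom_eq_of_trans_iff (procOf e G) (ptrans_procOf_iff he G) s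
end

section
/- The embedding of countable choice into separation-logic assertions equals an iterated separating conjunction: emb(⊕_{v∈S} P(v), t) = ⋆_{v∈S} emb(P(v), t), for any countable set of values S and place t. -/
/-! Both sides are spines of binary nodes. The choice clause of `emb` turns the tail
`⊕_{m ≥ n} P(e m)` into `emb(P(e n), t) ⋆ emb(⊕_{m ≥ n+1} P(e m), t)`, which is exactly how the
tail `⋆_{m ≥ n} emb(P(e m), t)` unfolds, so the pairs of tails form a bisimulation up to equality. -/

theorem PFunctor.M.corec_inl_of_copy {F : PFunctor} {β : Type*}
    (g : F.M ⊕ β → F (F.M ⊕ β))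
    (hg : ∀ p, g (.inl p) = ⟨(PFunctor.M.dest p).1, fun i => .inl ((PFunctor.M.dest p).2 i)⟩)
    (p : F.M) : PFunctor.M.corec g (.inl p) = p := by
  apply PFunctor.M.bisim (fun x y => x = PFunctor.M.corec g (.inl y)) _ _ _ rfl
  rintro _ y rfl
  rcases hdest : PFunctor.M.dest y with ⟨a, f⟩
  refine ⟨a, fun i => PFunctor.M.corec g (.inl (f i)), f, ?_, rfl, fun _ => rfl⟩
  rw [PFunctor.M.dest_corec, hg, hdest, PFunctor.map_eq]
  rfl

theorem PFunctor.M.dest_corec_of_copy {F : PFunctor} {β : Type*}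
    (g : F.M ⊕ β → F (F.M ⊕ β))
    (hg : ∀ p, g (.inl p) = ⟨(PFunctor.M.dest p).1, fun i => .inl ((PFunctor.M.dest p).2 i)⟩)
    (x : F.M ⊕ β) :
    PFunctor.M.dest (PFunctor.M.corec g x) =
      ⟨(g x).1, fun i => Sum.elim id (fun b => PFunctor.M.corec g (.inr b)) ((g x).2 i)⟩ := by
  rw [PFunctor.M.dest_corec]
  obtain ⟨a, k⟩ := g x
  rw [PFunctor.map_eq]
  congr 1
  funext i
  change PFunctor.M.corec g (k i) = Sum.elim id _ (k i)
  rcases k i with p | b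
  · exact PFunctor.M.corec_inl_of_copy g hg p
  · rfl

def vchoiceStep {B V : Type} (f : ℕ → Proc B V) :
    Proc B V ⊕ ℕ → ProcF B V (Proc B V ⊕ ℕ)
  | .inl p => ⟨(PFunctor.M.dest p).1, fun x => Sum.inl ((PFunctor.M.dest p).2 x)⟩
  | .inr n => ⟨.choice, fun x : Bool => if x then Sum.inl (f n) else Sum.inr (n + 1)⟩

def vchoiceFrom {B V : Type} (f : ℕ → Proc B V) (n : ℕ) : Proc B V :=
  PFunctor.M.corec (vchoiceStep f) (.inr n)

theorem vchoice_eq_vchoiceFrom_zero {B V : Type} (f : ℕ → Proc B V) :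
    vchoice f = vchoiceFrom f 0 := rfl

theorem dest_vchoiceFrom {B V : Type} (f : ℕ → Proc B V) (n : ℕ) :
    PFunctor.M.dest (vchoiceFrom f n) =
      ⟨.choice, fun x : Bool => if x then f n else vchoiceFrom f (n + 1)⟩ := by
  refine (PFunctor.M.dest_corec_of_copy (vchoiceStep f) (fun _ => rfl) (.inr n)).trans
    (congrArg (Sigma.mk _) (funext fun x => ?_))
  cases x <;> rfl

def allStarStep {B V Pl : Type} (φ : ℕ → Assn B V Pl) :
    Assn B V Pl ⊕ ℕ → AssnF B V Pl (Assn B V Pl ⊕ ℕ)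
  | .inl a => ⟨(PFunctor.M.dest a).1, fun x => Sum.inl ((PFunctor.M.dest a).2 x)⟩
  | .inr n => ⟨.star, fun x : Bool => if x then Sum.inl (φ n) else Sum.inr (n + 1)⟩

def allStarFrom {B V Pl : Type} (φ : ℕ → Assn B V Pl) (n : ℕ) : Assn B V Pl :=
  PFunctor.M.corec (allStarStep φ) (.inr n)

theorem allStar_eq_allStarFrom_zero {B V Pl : Type} (φ : ℕ → Assn B V Pl) :
    AllStar φ = allStarFrom φ 0 := rfl

theorem dest_allStarFrom {B V Pl : Type} (φ : ℕ → Assn B V Pl) (n : ℕ) :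
    PFunctor.M.dest (allStarFrom φ n) =
      ⟨.star, fun x : Bool => if x then φ n else allStarFrom φ (n + 1)⟩ := by
  refine (PFunctor.M.dest_corec_of_copy (allStarStep φ) (fun _ => rfl) (.inr n)).trans
    (congrArg (Sigma.mk _) (funext fun x => ?_))
  cases x <;> rfl

theorem dest_embA_of_dest_eq_choice {B V Pl : Type} {Q : Proc B V} {k : Bool → Proc B V}
    (hQ : PFunctor.M.dest Q = ⟨.choice, k⟩) (t : Pl) :
    PFunctor.M.dest (embA Q t) = ⟨.star, fun x : Bool => embA (k x) t⟩ := by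
  rw [embA, PFunctor.M.dest_corec, embStep, hQ]
  rfl

theorem embA_vchoiceFrom {B V Pl : Type} (f : ℕ → Proc B V) (t : Pl) (n : ℕ) :
    embA (vchoiceFrom f n) t = allStarFrom (fun m => embA (f m) t) n := by
  apply PFunctor.M.bisim (fun x y => x = y ∨
    ∃ m, x = embA (vchoiceFrom f m) t ∧ y = allStarFrom (fun m => embA (f m) t) m)
  · rintro x y (rfl | ⟨m, rfl, rfl⟩)
    · rcases PFunctor.M.dest x with ⟨a, k⟩
      exact ⟨a, k, k, rfl, rfl, fun _ => .inl rfl⟩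
    · refine ⟨.star, _, _, dest_embA_of_dest_eq_choice (dest_vchoiceFrom f m) t,
        dest_allStarFrom _ m, ?_⟩
      rintro (_ | _)
      · exact .inr ⟨m + 1, rfl, rfl⟩
      · exact .inl rfl
  · exact .inr ⟨n, rfl, rfl⟩

theorem emb_vchoice_eq_allStar_general {B V Pl : Type} (e : ℕ → V)
    (P : V → Proc B V) (t : Pl) :
    embA (vchoice (fun n => P (e n))) t = AllStar (fun n => embA (P (e n)) t) := by
  rw [vchoice_eq_vchoiceFrom_zero, allStar_eq_allStarFrom_zero]
  exact embA_vchoiceFrom _ t 0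

/-- The embedding of countable choice equals an iterated separating conjunction:
`emb(⊕_{v∈S} P(v), t) = ⋆_{v∈S} emb(P(v), t)`, for a countable set of values `S`
(given by an enumeration `e`). -/
theorem emb_vchoice_eq_allStar {B V Pl : Type} (S : Set V) (e : ℕ → V)
    (hS : Set.range e = S) (P : V → Proc B V) (t : Pl) :
    embA (vchoice (fun n => P (e n))) t = AllStar (fun n => embA (P (e n)) t) :=
  emb_vchoice_eq_allStar_general e P t
end

section
/- Every trace of a process P is a trace of its process assertion: traces(P) ⊆ tracesH(emb(P)), where emb(P) = ∃t. token(t) ⋆ emb(P, t), and tracesH(φ) is the set of traces executable in all heap models of φ under the heap transition semantics. -/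
/-! A model of `emb(P)` is a token `token(t)`, a model of `emb(P, t)` and a frame. Such a heap
can follow every step `bio(v, w)` of `P`: unfolding `emb(P, t)` along the choices made by the
step exposes a permission `bio(t, v, z, t')`. If `z = w`, rule Bio moves the token to `t'` and
leaves a model of `emb(P', t')`; otherwise rule Contradict jumps to the chaotic state `⊥`, which
performs every well-typed event by rule Chaos. -/

namespace ES

variable {S S' E : Type}

theorem mtrans_of_simulation {M : ES S E} {N : ES S' E} (R : S → S' → Prop)
    (hsim : ∀ s s' e s₁, R s s' → M.trans s e s₁ → ∃ s₁', N.trans s' e s₁' ∧ R s₁ s₁')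
    {s s₁ : S} {τ : List E} (hτ : M.mtrans s τ s₁) {s' : S'} (hs : R s s') :
    ∃ s₁', N.mtrans s' τ s₁' ∧ R s₁ s₁' := by
  induction hτ with
  | nil => exact ⟨s', .nil _, hs⟩
  | snoc _ hstep ih =>
    obtain ⟨s₁', hτ', hR⟩ := ih
    obtain ⟨s₂', hstep', hR'⟩ := hsim _ _ _ _ hR hstep
    exact ⟨s₂', hτ'.snoc hstep', hR'⟩

end ES

section

variable {B V Pl : Type} {Ty : B → V → Set V}

theorem Heap.exists_eq_single_add {h : Heap B V Pl} {c : Chunk B V Pl} (hc : 0 < h c) :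
    ∃ h', h = Heap.single c + h' := by
  refine ⟨h - Heap.single c, (add_tsub_cancel_of_le fun c' => ?_).symm⟩
  by_cases e : c' = c
  · subst e
    simpa [Heap.single] using Order.one_le_iff_pos.mpr hc
  · simp [Heap.single, e]

theorem PTrans.mem_ty {P P' : Proc B V} {a : B × V × V} (h : PTrans Ty P a P') :
    a.2.2 ∈ Ty a.1 a.2.1 := by
  induction h with
  | pref hw _ => exact hw
  | chl _ _ ih => exact ih
  | chr _ _ ih => exact ih

theorem SatF.mono {R R' : Heap B V Pl → Assn B V Pl → Prop} (hRR : ∀ h φ, R h φ → R' h φ)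
    {h : Heap B V Pl} {φ : Assn B V Pl} (hφ : SatF Ty R h φ) : SatF Ty R' h φ := by
  unfold SatF at hφ ⊢
  split at hφ
  · exact hφ
  · exact hφ
  · obtain ⟨h₁, h₂, rfl, h₁R, h₂R⟩ := hφ
    exact ⟨h₁, h₂, rfl, hRR _ _ h₁R, hRR _ _ h₂R⟩
  · obtain ⟨v, hv⟩ := hφ
    exact ⟨v, hRR _ _ hv⟩
  · obtain ⟨t, ht⟩ := hφ
    exact ⟨t, hRR _ _ ht⟩

theorem sat.unfold {h : Heap B V Pl} {φ : Assn B V Pl} (hφ : sat Ty h φ) :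
    SatF Ty (sat Ty) h φ := by
  obtain ⟨R, hR, hφ⟩ := hφ
  exact (hR _ _ hφ).mono fun h φ hr => ⟨R, hR, hr⟩

theorem sat_star {h : Heap B V Pl} {φ ψ : Assn B V Pl} (hs : sat Ty h (Assn.star φ ψ)) :
    ∃ h₁ h₂, h = h₁ + h₂ ∧ sat Ty h₁ φ ∧ sat Ty h₂ ψ :=
  hs.unfold

theorem sat_exv {h : Heap B V Pl} {f : V → Assn B V Pl} (hs : sat Ty h (Assn.exv f)) :
    ∃ v, sat Ty h (f v) :=
  hs.unfold

theorem sat_expl {h : Heap B V Pl} {f : Pl → Assn B V Pl} (hs : sat Ty h (Assn.expl f)) :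
    ∃ t, sat Ty h (f t) :=
  hs.unfold

theorem sat_mkChunk {h : Heap B V Pl} {c : Chunk B V Pl} (hs : sat Ty h (Assn.mkChunk c)) :
    0 < h c ∧ c.wellTyped Ty :=
  hs.unfold

theorem embA_of_dest_pre {P : Proc B V} {b : B} {v : V} {k : V → Proc B V}
    (hP : PFunctor.M.dest P = ⟨.pre b v, k⟩) (t : Pl) :
    embA P t = Assn.expl fun t' => Assn.exv fun z =>
      Assn.star (Assn.mkChunk (.bio b t v z t')) (embA (k z) t') := by
  rw [embA, PFunctor.M.corec_def]
  simp only [embStep, hP]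
  refine congrArg (fun g => PFunctor.M.mk ⟨_, g⟩) (funext fun t' => ?_)
  -- the `show`s restate the goals at type `Assn`, where `rw` can find the `corec`
  show PFunctor.M.corec embStep (EmbSt.ex1 b v k t t') = _
  rw [PFunctor.M.corec_def]
  refine congrArg (fun g => PFunctor.M.mk ⟨_, g⟩) (funext fun z => ?_)
  show PFunctor.M.corec embStep (EmbSt.star1 b v k t t' z) = _
  rw [PFunctor.M.corec_def]
  refine congrArg (fun g => PFunctor.M.mk ⟨_, g⟩) (funext fun x => ?_)
  cases x
  · rfl
  · show PFunctor.M.corec embStep (EmbSt.leafChunk (.bio b t v z t')) = _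
    rw [PFunctor.M.corec_def]
    exact congrArg (fun g => PFunctor.M.mk ⟨_, g⟩) (funext fun e => e.elim)

theorem embA_of_dest_choice {P : Proc B V} {f : Bool → Proc B V}
    (hP : PFunctor.M.dest P = ⟨.choice, f⟩) (t : Pl) :
    embA P t = Assn.star (embA (f true) t) (embA (f false) t) := by
  rw [embA, PFunctor.M.corec_def]
  simp only [embStep, hP]
  refine congrArg (fun g => PFunctor.M.mk ⟨_, g⟩) (funext fun x => ?_)
  cases x <;> rfl

theorem PTrans.exists_bio_chunk {P P' : Proc B V} {a : B × V × V} (hstep : PTrans Ty P a P')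
    {h : Heap B V Pl} {t : Pl} (hs : sat Ty h (embA P t)) :
    ∃ z t' h₁ h₂, z ∈ Ty a.1 a.2.1 ∧ h = Heap.single (.bio a.1 t a.2.1 z t') + h₁ + h₂ ∧
      (z = a.2.2 → sat Ty h₁ (embA P' t')) := by
  induction hstep generalizing h with
  | pref _ hP =>
    rw [embA_of_dest_pre hP] at hs
    obtain ⟨t', hs⟩ := sat_expl hs
    obtain ⟨z, hs⟩ := sat_exv hs
    obtain ⟨hc, hk, rfl, hcs, hks⟩ := sat_star hs
    obtain ⟨hpos, hz⟩ := sat_mkChunk hcs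
    obtain ⟨hc', rfl⟩ := Heap.exists_eq_single_add hpos
    exact ⟨z, t', hk, hc', hz, by abel, fun hzw => by cases hzw; exact hks⟩
  | chl hP _ ih =>
    rw [embA_of_dest_choice hP] at hs
    obtain ⟨h₁, h₂, rfl, hs₁, -⟩ := sat_star hs
    obtain ⟨z, t', k₁, k₂, hz, rfl, hk₁⟩ := ih hs₁
    exact ⟨z, t', k₁, k₂ + h₂, hz, by abel, hk₁⟩
  | chr hP _ ih =>
    rw [embA_of_dest_choice hP] at hs
    obtain ⟨h₁, h₂, rfl, -, hs₂⟩ := sat_star hs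
    obtain ⟨z, t', k₁, k₂, hz, rfl, hk₁⟩ := ih hs₂
    exact ⟨z, t', k₁, k₂ + h₁, hz, by abel, hk₁⟩

variable (Ty) in
def EmbSim : Proc B V → Option (Heap B V Pl) → Prop
  | _, none => True
  | P, some h => ∃ t h₁ h₂, h = Heap.single (.token t) + h₁ + h₂ ∧ sat Ty h₁ (embA P t)

theorem EmbSim.step {P P' : Proc B V} {a : B × V × V} {os : Option (Heap B V Pl)}
    (hstep : PTrans Ty P a P') (hs : EmbSim Ty P os) :
    ∃ os', HTrans Ty os a os' ∧ EmbSim Ty P' os' := by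
  obtain ⟨b, v, w⟩ := a
  cases os with
  | none => exact ⟨none, .chaos hstep.mem_ty, trivial⟩
  | some h =>
    obtain ⟨t, h₁, h₂, rfl, hs⟩ := hs
    obtain ⟨z, t', k₁, k₂, hz, rfl, hk₁⟩ := hstep.exists_bio_chunk hs
    have hsplit : Heap.single (.token t) + (Heap.single (.bio b t v z t') + k₁ + k₂) + h₂ =
        Heap.single (.token t) + Heap.single (.bio b t v z t') + (k₁ + (k₂ + h₂)) := by
      abel
    rw [hsplit]
    by_cases hzw : z = w
    · subst hzw
      exact ⟨_, .bio hz, t', k₁, k₂ + h₂, (add_assoc _ _ _).symm, hk₁ rfl⟩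
    · exact ⟨none, .contradict hzw hz hstep.mem_ty, trivial⟩

end

/-- Every trace of a process `P` is a trace of its process assertion
`emb(P) = ∃t. token(t) ⋆ emb(P, t)`. -/
theorem traces_proc_subset_embedding {B V Pl : Type} (Ty : B → V → Set V)
    (P : Proc B V) :
    (pES Ty).tracesFrom P ⊆ tracesHA Ty (procAssn Pl P) := by
  rintro τ ⟨_, hP, P', hτ⟩ h hh
  rw [Set.mem_singleton_iff.mp hP] at hτ
  obtain ⟨t, hh⟩ := sat_expl hh
  obtain ⟨h₁, h₂, rfl, htok, hemb⟩ := sat_star hh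
  obtain ⟨h₁', rfl⟩ := Heap.exists_eq_single_add (sat_mkChunk htok).1
  have hinit : EmbSim Ty P (some (Heap.single (.token t) + h₁' + h₂)) :=
    ⟨t, h₂, h₁', add_right_comm _ _ _, hemb⟩
  obtain ⟨os, hτ', -⟩ :=
    ES.mtrans_of_simulation (N := hES Ty) (EmbSim Ty)
      (fun _ _ _ _ hs hstep => EmbSim.step hstep hs) hτ hinit
  exact ⟨_, rfl, os, hτ'⟩
end

section
/- The canonical model function gmod satisfies the fixed-point equations: gmod(Null, ρ, τ, ppos, cpos) = ∅; gmod(bio(v,z).P, ρ, τ, ppos, cpos) = {bio(ppos, v, wρ, cpos·L)} + gmod(P[wρ/z], ρ, τ·bio(v,wρ), cpos·L, cpos·L) where wρ = ρ(τ, bio, v); and gmod(P1 ⊕ P2, ρ, τ, ppos, cpos) = gmod(P1, ρ, τ, ppos, cpos·L) + gmod(P2, ρ, τ, ppos, cpos·R). -/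
/-! The sum `hSum` of a family of heaps, a supremum of finite partial sums, is an unconditional
`HasSum` in `ℕ∞`, so the sum over positions defining `gmod` splits along
`List Bool ≃ Unit ⊕ (List Bool ⊕ List Bool)` into the root position and the two subtrees; at each
of these `pm` unfolds by a single step. -/

def listBoolEquiv : List Bool ≃ Unit ⊕ (List Bool ⊕ List Bool) where
  toFun
    | [] => .inl ()
    | true :: l => .inr (.inl l)
    | false :: l => .inr (.inr l)
  invFun
    | .inl () => []
    | .inr (.inl l) => true :: l
    | .inr (.inr l) => false :: l
  left_inv l := by rcases l with _ | ⟨_ | _, l⟩ <;> rfl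
  right_inv s := by rcases s with _ | l | l <;> rfl

theorem hasSum_list_bool {M : Type*} [AddCommMonoid M] [TopologicalSpace M] [ContinuousAdd M]
    {f : List Bool → M} {a b : M} (ht : HasSum (fun l => f (true :: l)) a)
    (hf : HasSum (fun l => f (false :: l)) b) : HasSum f (f [] + (a + b)) := by
  rw [← listBoolEquiv.symm.hasSum_iff]
  exact (hasSum_unique _).sum (ht.sum hf)

theorem ENat.hasSum_iSup_sum {ι : Type*} (f : ι → ℕ∞) :
    HasSum f (⨆ s : Finset ι, ∑ i ∈ s, f i) :=
  hasSum_of_isLUB _ isLUB_iSup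

section hSum

variable {B V Pl ι : Type}

theorem hasSum_hSum (f : ι → Heap B V Pl) (c : Chunk B V Pl) :
    HasSum (fun i => f i c) (hSum f c) :=
  ENat.hasSum_iSup_sum _

theorem hSum_zero : hSum (fun _ : ι => (0 : Heap B V Pl)) = 0 :=
  funext fun c => (hasSum_hSum _ c).unique hasSum_zero

theorem hSum_list_bool (f : List Bool → Heap B V Pl) :
    hSum f = f [] + (hSum (fun l => f (true :: l)) + hSum (fun l => f (false :: l))) :=
  funext fun c => (hasSum_hSum f c).unique (hasSum_list_bool (hasSum_hSum _ c) (hasSum_hSum _ c))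

end hSum

namespace Proc

variable {B V : Type}

theorem dest_null : PFunctor.M.dest (null : Proc B V) = ⟨.null, fun e => e.elim⟩ :=
  PFunctor.M.dest_mk _

theorem dest_pre (b : B) (v : V) (k : V → Proc B V) :
    PFunctor.M.dest (pre b v k) = ⟨.pre b v, k⟩ :=
  PFunctor.M.dest_mk _

theorem dest_choice (P Q : Proc B V) :
    PFunctor.M.dest (choice P Q) = ⟨.choice, fun x : Bool => if x then P else Q⟩ :=
  PFunctor.M.dest_mk _

end Proc

section pm

variable {B V : Type} (ρ : List (B × V × V) → B → V → V) (τ : List (B × V × V))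
  (pp cp : List Bool)

theorem pm_null (pos : List Bool) : pm ρ Proc.null τ pp cp pos = 0 := by
  rcases pos with _ | ⟨_ | _, pos⟩ <;> simp only [pm, Proc.dest_null]

theorem pm_pre_nil (b : B) (v : V) (k : V → Proc B V) :
    pm ρ (Proc.pre b v k) τ pp cp [] = Heap.single (.bio b pp v (ρ τ b v) (cp ++ [true])) := by
  simp only [pm, Proc.dest_pre]

theorem pm_pre_true_cons (b : B) (v : V) (k : V → Proc B V) (pos : List Bool) :
    pm ρ (Proc.pre b v k) τ pp cp (true :: pos) =
      pm ρ (k (ρ τ b v)) (τ ++ [(b, v, ρ τ b v)]) (cp ++ [true]) (cp ++ [true]) pos := by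
  simp only [pm, Proc.dest_pre]

theorem pm_pre_false_cons (b : B) (v : V) (k : V → Proc B V) (pos : List Bool) :
    pm ρ (Proc.pre b v k) τ pp cp (false :: pos) = 0 := by
  simp only [pm, Proc.dest_pre]

theorem pm_choice_nil (P₁ P₂ : Proc B V) : pm ρ (Proc.choice P₁ P₂) τ pp cp [] = 0 := by
  simp only [pm, Proc.dest_choice]

theorem pm_choice_cons (P₁ P₂ : Proc B V) (d : Bool) (pos : List Bool) :
    pm ρ (Proc.choice P₁ P₂) τ pp cp (d :: pos) =
      pm ρ (if d then P₁ else P₂) τ pp (cp ++ [d]) pos := by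
  simp only [pm, Proc.dest_choice]
  rfl

theorem gmod_eq_pm_nil_add (P : Proc B V) :
    gmod ρ P τ pp cp = pm ρ P τ pp cp [] +
      (hSum (fun l => pm ρ P τ pp cp (true :: l)) + hSum (fun l => pm ρ P τ pp cp (false :: l))) :=
  hSum_list_bool _

end pm

/-- The fixed-point equations of the canonical model function `gmod`. -/
theorem gmod_fixed_point {B V : Type} (ρ : List (B × V × V) → B → V → V)
    (τ : List (B × V × V)) (pp cp : List Bool) :
    (gmod ρ Proc.null τ pp cp = 0) ∧
    (∀ (b : B) (v : V) (k : V → Proc B V),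
        gmod ρ (Proc.pre b v k) τ pp cp =
          Heap.single (Chunk.bio b pp v (ρ τ b v) (cp ++ [true])) +
            gmod ρ (k (ρ τ b v)) (τ ++ [(b, v, ρ τ b v)]) (cp ++ [true]) (cp ++ [true])) ∧
    (∀ P1 P2 : Proc B V,
        gmod ρ (Proc.choice P1 P2) τ pp cp =
          gmod ρ P1 τ pp (cp ++ [true]) + gmod ρ P2 τ pp (cp ++ [false])) := by
  refine ⟨?_, fun b v k => ?_, fun P1 P2 => ?_⟩ <;> rw [gmod_eq_pm_nil_add]
  · simp only [pm_null, hSum_zero, add_zero]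
  · simp only [pm_pre_nil, pm_pre_true_cons, pm_pre_false_cons, hSum_zero, add_zero]
    rfl
  · simp only [pm_choice_nil, pm_choice_cons, zero_add, if_true, Bool.false_eq_true, if_false]
    rfl
end

section
/- Transitions with the scheduled input never lead to the chaotic state: if gmod(P, ρ, τ, ppos, cpos) with a token at ppos makes a heap transition labeled bio(v, w) to state ho, where ppos ≤ cpos and w = ρ(τ, bio, v), then ho ≠ ⊥. -/
/-! The Contradict rule would need a token at some `t` and a permission `bio(t, v, w, t')` with
`w ≠ ρ(τ, bio, v)`. The only token of `gmod^•` sits at `ppos`, and the permissions of `gmod` rooted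
at `ppos` are exactly those of the first prefix reached without consuming an input, which were
generated with the scheduled input `ρ(τ, bio, v)`; permissions reached after a prefix are rooted at
places strictly longer than `cpos`, hence different from `ppos ≤ cpos`. -/

section CanonicalModel

variable {B V : Type} {ρ : List (B × V × V) → B → V → V}

lemma hSum_apply_ne_zero {Pl ι : Type} {f : ι → Heap B V Pl} {c : Chunk B V Pl}
    (h : hSum f c ≠ 0) : ∃ i, f i c ≠ 0 := by
  by_contra! hzero
  exact h (by simp [hSum, hzero])

lemma pm_apply_token (pos : List Bool) (P : Proc B V) (τ : List (B × V × V))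
    (pp cp t : List Bool) : pm ρ P τ pp cp pos (.token t) = 0 := by
  induction pos generalizing P τ pp cp with
  | nil =>
    rcases hd : PFunctor.M.dest P with ⟨_ | _ | _, k⟩ <;> simp [pm, hd, Heap.single]
  | cons d pos ih =>
    rcases hd : PFunctor.M.dest P with ⟨_ | _ | _, k⟩ <;> cases d <;> simp [pm, hd] <;>
      exact ih _ _ _ _

lemma gmod_apply_token (P : Proc B V) (τ : List (B × V × V)) (pp cp t : List Bool) :
    gmod ρ P τ pp cp (.token t) = 0 := by
  simp [gmod, hSum, pm_apply_token]

lemma pm_apply_bio_ne_zero {b : B} {v w : V} {t t' pos : List Bool} {P : Proc B V}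
    {τ : List (B × V × V)} {pp cp : List Bool} (h : pm ρ P τ pp cp pos (.bio b t v w t') ≠ 0) :
    (t = pp ∧ w = ρ τ b v) ∨ cp.length < t.length := by
  induction pos generalizing P τ pp cp with
  | nil =>
    rcases hd : PFunctor.M.dest P with ⟨_ | ⟨b', v'⟩ | _, k⟩ <;> simp [pm, hd, Heap.single] at h
    obtain ⟨rfl, rfl, rfl, rfl, -⟩ := h
    exact .inl ⟨rfl, rfl⟩
  | cons d pos ih =>
    rcases hd : PFunctor.M.dest P with ⟨_ | ⟨b', v'⟩ | _, k⟩
    · cases d <;> simp [pm, hd] at h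
    · cases d <;> simp only [pm, hd] at h
      · simp at h
      · right
        rcases ih h with ⟨rfl, -⟩ | hlt
        · simp
        · simp only [List.length_append, List.length_singleton] at hlt
          omega
    · simp only [pm, hd] at h
      refine (ih h).imp_right fun hlt => ?_
      simp only [List.length_append, List.length_singleton] at hlt
      omega

lemma gmod_apply_bio_of_prefix {b : B} {v w : V} {t' : List Bool} {P : Proc B V}
    {τ : List (B × V × V)} {pp cp : List Bool} (hpc : pp <+: cp)
    (h : gmod ρ P τ pp cp (.bio b pp v w t') ≠ 0) : w = ρ τ b v := by
  obtain ⟨pos, hpos⟩ := hSum_apply_ne_zero h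
  refine (pm_apply_bio_ne_zero hpos).elim And.right fun hlt => ?_
  exact absurd hpc.length_le (by omega)

lemma gmodTok_apply_token_ne_zero {P : Proc B V} {τ : List (B × V × V)} {pp cp t : List Bool}
    (h : gmodTok ρ P τ pp cp (.token t) ≠ 0) : t = pp := by
  by_contra hne
  simp [gmodTok, gmod_apply_token, Heap.single, hne] at h

lemma gmodTok_apply_bio (P : Proc B V) (τ : List (B × V × V)) (pp cp : List Bool) (b : B)
    (v w : V) (t t' : List Bool) :
    gmodTok ρ P τ pp cp (.bio b t v w t') = gmod ρ P τ pp cp (.bio b t v w t') := by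
  simp [gmodTok, Heap.single]

end CanonicalModel

/-- Transitions with the scheduled input never lead to the chaotic state ⊥. -/
theorem scheduled_input_no_chaos {B V : Type} (Ty : B → V → Set V)
    (ρ : List (B × V × V) → B → V → V) (P : Proc B V) (τ : List (B × V × V))
    (pp cp : List Bool) (b : B) (v : V) (ho : Option (Heap B V (List Bool)))
    (hpc : pp <+: cp)
    (ht : HTrans Ty (some (gmodTok ρ P τ pp cp)) (b, v, ρ τ b v) ho) :
    ho ≠ none := by
  rintro rfl
  generalize hsrc : some (gmodTok ρ P τ pp cp) = src at ht
  cases ht with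
  | chaos => cases hsrc
  | @contradict _ _ w _ t t' _ hne =>
    have heq := Option.some.inj hsrc
    have htok : gmodTok ρ P τ pp cp (.token t) ≠ 0 := by
      rw [heq]
      simp [Heap.single]
    obtain rfl := gmodTok_apply_token_ne_zero htok
    have hbio : gmod ρ P τ t cp (.bio b t v w t') ≠ 0 := by
      rw [← gmodTok_apply_bio, heq]
      simp [Heap.single]
    exact hne (gmod_apply_bio_of_prefix hpc hbio)
end
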